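/- arXiv:0706.0111 — 2 statements merged into one kernel-verified Lean document; each statement's English description precedes it below -/
import Mathlib

section
/- Let R be a valuation ring with maximal ideal P and let Z be its set of zero-divisors (a prime ideal of R). Then Z = P (i.e. every non-unit of R is a zero-divisor) if and only if every singly projective R-module is a content module. -/
/-! In a valuation ring one coordinate of a vector in a free module divides all the others, so in
a singly projective module every `x` is `c • m` with `ann x = ann c`. If `Z = P`, then for every
`b ∈ P` some `s` kills `c * b` but not `c`; hence `x ∉ (c * b) • M`, and as every ideal not
containing `c` lies in `c P`, the content of `x` is `(c)` and `x ∈ (c) • M`.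
Conversely, for a non-zero-divisor `r ∈ P` the cyclic submodules of `R[1/r]` sit inside the free
submodules `R • r⁻ⁿ`, so `R[1/r]` is singly projective. The content of `1` there lies in every
`(r ^ n)`, while `1 ∈ c(1) • R[1/r]` puts some power `r ^ n` into it; `r ^ n ∈ (r ^ (n + 1))`
then makes `r` a unit. -/

universe u

/-- `M` is singly projective if for every cyclic submodule `N` of `M` the inclusion
`N → M` factors through a free module. -/
def SinglyProjective (R : Type u) [Ring R] (M : Type v) [AddCommGroup M] [Module R M] : Prop :=
  ∀ x : M, ∃ (ι : Type v) (φ : (Submodule.span R ({x} : Set M)) →ₗ[R] (ι →₀ R))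
    (π : (ι →₀ R) →ₗ[R] M), ∀ n : (Submodule.span R ({x} : Set M)), π (φ n) = (n : M)

/-- `M` is a content module if `x ∈ c(x)·M` for every `x ∈ M`, where the content ideal `c(x)`
is the intersection of all ideals `A` with `x ∈ A·M`. -/
def ContentModule (R : Type u) [CommRing R] (M : Type v) [AddCommGroup M] [Module R M] :
    Prop :=
  ∀ x : M, x ∈ (sInf {A : Ideal R | x ∈ A • (⊤ : Submodule R M)}) • (⊤ : Submodule R M)

section PreValuationRing

variable {R : Type*} [CommRing R] [PreValuationRing R]

theorem Finsupp.exists_apply_dvd {ι : Type*} (y : ι →₀ R) (hy : y ≠ 0) :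
    ∃ i, ∀ j, y i ∣ y j := by
  classical
  obtain ⟨i₀, hi₀⟩ := Finsupp.ne_iff.mp hy
  have : Nontrivial R := nontrivial_of_ne _ _ hi₀
  obtain ⟨i, -, hi⟩ := y.support.exists_max_image (fun j => Ideal.span {y j})
    (Finsupp.support_nonempty_iff.mpr hy)
  refine ⟨i, fun j => ?_⟩
  by_cases hj : j ∈ y.support
  · exact Ideal.span_singleton_le_span_singleton.mp (hi j hj)
  · simp [Finsupp.notMem_support_iff.mp hj]

theorem Finsupp.exists_eq_apply_smul {ι : Type*} (y : ι →₀ R) (hy : y ≠ 0) :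
    ∃ i, ∃ z : ι →₀ R, y = y i • z := by
  obtain ⟨i, hi⟩ := y.exists_apply_dvd hy
  choose t ht using hi
  refine ⟨i, ∑ j ∈ y.support, Finsupp.single j (t j), ?_⟩
  simp only [Finset.smul_sum, Finsupp.smul_single, smul_eq_mul, ← ht]
  exact (Finsupp.sum_single y).symm

theorem Submodule.exists_eq_smul_of_mem_smul_top {M : Type*} [AddCommGroup M] [Module R M]
    {I : Ideal R} {x : M} (hx : x ∈ I • (⊤ : Submodule R M)) :
    ∃ a ∈ I, ∃ m : M, x = a • m := by
  refine Submodule.smul_induction_on hx (fun a ha m _ => ⟨a, ha, m, rfl⟩) ?_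
  rintro _ _ ⟨a, ha, m, rfl⟩ ⟨b, hb, n, rfl⟩
  rcases ValuationRing.dvd_total a b with ⟨c, rfl⟩ | ⟨c, rfl⟩
  · exact ⟨a, ha, m + c • n, by rw [smul_add, smul_smul]⟩
  · exact ⟨b, hb, c • m + n, by rw [smul_add, smul_smul]⟩

theorem exists_mul_mul_eq_zero_and_mul_ne_zero {c u t : R} (hc : c ≠ 0) (ht : t ≠ 0)
    (hut : u * t = 0) : ∃ s, s * (c * u) = 0 ∧ s * c ≠ 0 := by
  by_cases hcu : c * u = 0
  · exact ⟨1, by rw [one_mul, hcu], by rwa [one_mul]⟩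
  rcases ValuationRing.dvd_total (c * u) t with ⟨d, rfl⟩ | ⟨d, hd⟩
  · refine ⟨u * d, by linear_combination hut, fun h => ht ?_⟩
    linear_combination h
  · exact ⟨u, by rw [hd]; linear_combination d * hut, by rwa [mul_comm]⟩

theorem SinglyProjective.exists_eq_smul {M : Type*} [AddCommGroup M] [Module R M]
    (hM : SinglyProjective R M) (x : M) :
    ∃ (c : R) (m : M), x = c • m ∧ ∀ s : R, s • x = 0 → s * c = 0 := by
  obtain ⟨ι, φ, π, hπφ⟩ := hM x
  let x' : R ∙ x := ⟨x, Submodule.mem_span_singleton_self x⟩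
  have hx : π (φ x') = x := hπφ x'
  by_cases hy : φ x' = 0
  · exact ⟨0, x, by rw [zero_smul, ← hx, hy, map_zero], fun s _ => mul_zero s⟩
  obtain ⟨i, z, hz⟩ := (φ x').exists_eq_apply_smul hy
  refine ⟨φ x' i, π z, by rw [← map_smul, ← hz, hx], fun s hs => ?_⟩
  have hsy : s • φ x' = 0 := by rw [← map_smul, show s • x' = 0 from Subtype.ext hs, map_zero]
  simpa using congr($hsy i)

variable [IsLocalRing R]

theorem mem_of_smul_mem_smul_top
    (hZ : ∀ u ∈ IsLocalRing.maximalIdeal R, ∃ t : R, t ≠ 0 ∧ u * t = 0)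
    {M : Type*} [AddCommGroup M] [Module R M] {c : R} {m : M}
    (hann : ∀ s : R, s • c • m = 0 → s * c = 0) {A : Ideal R}
    (hA : c • m ∈ A • (⊤ : Submodule R M)) : c ∈ A := by
  by_contra hcA
  obtain ⟨a, ha, w, hw⟩ := Submodule.exists_eq_smul_of_mem_smul_top hA
  obtain ⟨b, rfl⟩ : c ∣ a := (ValuationRing.dvd_total c a).resolve_right
    fun ⟨d, hd⟩ => hcA (hd ▸ A.mul_mem_right d ha)
  have hb : b ∈ IsLocalRing.maximalIdeal R := fun hb =>
    hcA (by simpa [mul_assoc] using A.mul_mem_right ↑hb.unit⁻¹ ha)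
  have hc : c ≠ 0 := by rintro rfl; exact hcA A.zero_mem
  obtain ⟨t, ht, hbt⟩ := hZ b hb
  obtain ⟨s, hs, hsc⟩ := exists_mul_mul_eq_zero_and_mul_ne_zero hc ht hbt
  exact hsc (hann s (by rw [hw, smul_smul, hs, zero_smul]))

theorem contentModule_of_singlyProjective
    (hZ : ∀ u ∈ IsLocalRing.maximalIdeal R, ∃ t : R, t ≠ 0 ∧ u * t = 0)
    {M : Type*} [AddCommGroup M] [Module R M] (hM : SinglyProjective R M) : ContentModule R M := by
  intro x
  obtain ⟨c, m, rfl, hann⟩ := hM.exists_eq_smul x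
  have hc : Ideal.span {c} ≤ sInf {A : Ideal R | c • m ∈ A • (⊤ : Submodule R M)} :=
    (Ideal.span_singleton_le_iff_mem _).mpr <| Submodule.mem_sInf.mpr fun A hA =>
      mem_of_smul_mem_smul_top hZ hann hA
  exact Submodule.smul_mono_left hc
    (Submodule.smul_mem_smul (Ideal.mem_span_singleton_self c) Submodule.mem_top)

end PreValuationRing

theorem singlyProjective_of_forall_mem_span_singleton {R : Type*} [CommRing R] {M : Type*}
    [AddCommGroup M] [Module R M]
    (h : ∀ x : M, ∃ e : M, Function.Injective (LinearMap.toSpanSingleton R M e) ∧ x ∈ R ∙ e) :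
    SinglyProjective R M := by
  intro x
  obtain ⟨e, he, hxe⟩ := h x
  let E : R ≃ₗ[R] R ∙ e := (LinearEquiv.ofInjective _ he).trans
    (LinearEquiv.ofEq _ _ (LinearMap.range_toSpanSingleton e))
  refine ⟨PUnit, Finsupp.lsingle PUnit.unit ∘ₗ E.symm.toLinearMap ∘ₗ
    Submodule.inclusion ((Submodule.span_singleton_le_iff_mem x _).mpr hxe),
    Finsupp.linearCombination R fun _ => e, fun n => ?_⟩
  simp only [LinearMap.comp_apply, Finsupp.lsingle_apply, Finsupp.linearCombination_single]
  exact congrArg Subtype.val (E.apply_symm_apply _)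

section Localization

variable {R : Type*} [CommRing R] {S : Submonoid R} {A : Type*} [CommRing A] [Algebra R A]
  [IsLocalization S A]

theorem IsLocalization.singlyProjective (hS : S ≤ nonZeroDivisors R) : SinglyProjective R A := by
  refine singlyProjective_of_forall_mem_span_singleton fun x => ?_
  obtain ⟨⟨a, t⟩, rfl⟩ := IsLocalization.mk'_surjective S x
  refine ⟨IsLocalization.mk' _ 1 t, fun s s' hss' => ?_, ?_⟩
  · simp only [LinearMap.toSpanSingleton_apply, IsLocalization.smul_mk'_one,
      IsLocalization.mk'_eq_iff_eq, map_mul] at hss'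
    exact IsLocalization.injective A hS ((IsLocalization.map_units A t).mul_left_cancel hss')
  · exact Submodule.mem_span_singleton.mpr ⟨a, IsLocalization.smul_mk'_one a t⟩

theorem IsLocalization.one_mem_smul_top_iff (hS : S ≤ nonZeroDivisors R) {I : Ideal R} :
    (1 : A) ∈ I • (⊤ : Submodule R A) ↔ ∃ t ∈ S, t ∈ I := by
  rw [Ideal.smul_top_eq_map, Submodule.restrictScalars_mem,
    IsLocalization.mem_map_algebraMap_iff S]
  constructor
  · rintro ⟨⟨⟨a, ha⟩, t⟩, h⟩
    refine ⟨t, t.2, ?_⟩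
    rw [one_mul] at h
    rwa [IsLocalization.injective _ hS h]
  · rintro ⟨t, ht, htI⟩
    exact ⟨⟨⟨t, htI⟩, ⟨t, ht⟩⟩, one_mul _⟩

end Localization

section Away

variable {R : Type*} [CommRing R] {r : R}

theorem isUnit_of_pow_succ_dvd_pow (hr : r ∈ nonZeroDivisors R) {n : ℕ}
    (h : r ^ (n + 1) ∣ r ^ n) : IsUnit r := by
  obtain ⟨d, hd⟩ := h
  refine .of_mul_eq_one d ((mul_cancel_left_mem_nonZeroDivisors (pow_mem hr n)).mp ?_)
  rw [mul_one, ← mul_assoc, ← pow_succ, ← hd]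

theorem IsLocalization.Away.isUnit_of_contentModule {A : Type*} [CommRing A] [Algebra R A]
    [IsLocalization.Away r A] (hr : r ∈ nonZeroDivisors R) (h : ContentModule R A) :
    IsUnit r := by
  have hS : Submonoid.powers r ≤ nonZeroDivisors R := Submonoid.powers_le.mpr hr
  obtain ⟨_, ⟨n, rfl⟩, hn⟩ := (IsLocalization.one_mem_smul_top_iff hS).mp (h 1)
  have hmem : Ideal.span {r ^ (n + 1)} ∈ {I : Ideal R | (1 : A) ∈ I • (⊤ : Submodule R A)} :=
    (IsLocalization.one_mem_smul_top_iff (I := Ideal.span {r ^ (n + 1)}) hS).mpr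
      ⟨r ^ (n + 1), ⟨n + 1, rfl⟩, Ideal.mem_span_singleton_self _⟩
  exact isUnit_of_pow_succ_dvd_pow hr (Ideal.mem_span_singleton.mp (sInf_le hmem hn))

end Away

/-- let `R` be a valuation ring with maximal ideal `P` and `Z` its set of
zero-divisors.  Then `Z = P` if and only if every singly projective `R`-module is a content
module. -/
theorem zeroDivisors_eq_maximalIdeal_iff_singlyProjective_content (R : Type u) [CommRing R]
    [IsLocalRing R] (hval : ∀ I J : Ideal R, I ≤ J ∨ J ≤ I) :
    {r : R | ∃ s : R, s ≠ 0 ∧ r * s = 0} = (IsLocalRing.maximalIdeal R : Set R) ↔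
      ∀ (M : Type u) [AddCommGroup M] [Module R M],
        SinglyProjective R M → ContentModule R M := by
  have : PreValuationRing R := PreValuationRing.iff_ideal_total.mpr ⟨hval⟩
  constructor
  · intro hZ M _ _
    exact contentModule_of_singlyProjective fun u hu => (Set.ext_iff.mp hZ u).mpr hu
  · intro h
    refine Set.Subset.antisymm (fun r ⟨s, hs, hrs⟩ hr => hs (hr.mul_right_eq_zero.mp hrs))
      fun r hr => ?_
    by_contra hrZ
    have hr₀ : r ∈ nonZeroDivisors R :=
      mem_nonZeroDivisors_iff_left.mpr fun s hs => by_contra fun hs₀ => hrZ ⟨s, hs₀, hs⟩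
    have hM : SinglyProjective R (Localization.Away r) :=
      IsLocalization.singlyProjective (Submonoid.powers_le.mpr hr₀)
    exact hr (IsLocalization.Away.isUnit_of_contentModule hr₀ (h _ hM))
end

section
/- Let R be a valuation ring with maximal ideal P and set of zero-divisors Z. Then the following conditions are equivalent: (1) R is injective as an R-module; (2) every singly projective R-module is locally projective; (3) Z = P and every singly projective R-module is finitely projective. -/
/-!
Over a valuation ring, `M` is singly projective iff every `x : M` is `s • y` with
`ann x ≤ ann s`: map `x` into a free module and factor out the coordinate dividing all others.

(1) ⇒ (2): if `R` is self-injective, `r • x ↦ r * s` extends to `h : M → R`, and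
`id - h(·) • y` kills `x`, so one generator of a finitely generated submodule can be split off
at a time.
(2) ⇒ (3): for a regular nonunit `p`, the singly projective module `R[1/p]` would give
`1 ∈ p R` once `1` factors through a free module.
(3) ⇒ (1): the injective hull `E` of `R` is singly projective, since each annihilator in `E`
is that of an element of `R` and `E` is divisible accordingly. Given `f : I → R`, pick `θ ∈ E`
with `i • θ = f i • 1`; factoring the span of `1` and `θ` through a free module, a coordinate of
the image of `1` is regular, hence a unit, and dividing by it extends `f` (Baer's criterion).
-/

universe u

def FinitelyProjective (R : Type u) [Ring R] (M : Type v) [AddCommGroup M] [Module R M] : Prop :=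
  ∀ N : Submodule R M, N.FG → ∃ (ι : Type v) (φ : N →ₗ[R] (ι →₀ R))
    (π : (ι →₀ R) →ₗ[R] M), ∀ n : N, π (φ n) = (n : M)

def LocallyProjective (R : Type u) [Ring R] (M : Type v) [AddCommGroup M] [Module R M] : Prop :=
  ∀ N : Submodule R M, N.FG → ∃ (ι : Type v) (φ : M →ₗ[R] (ι →₀ R))
    (π : (ι →₀ R) →ₗ[R] M), ∀ x ∈ N, π (φ x) = x

universe v

open Submodule

theorem PreValuationRing.exists_dvd_forall {α : Type*} [Monoid α] [PreValuationRing α] {ι : Type*}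
    {s : Finset ι} (hs : s.Nonempty) (f : ι → α) : ∃ i ∈ s, ∀ j ∈ s, f i ∣ f j := by
  classical
  induction hs using Finset.Nonempty.cons_induction with
  | singleton a => simp
  | cons a s _ _ ih =>
    obtain ⟨i, hi, hdvd⟩ := ih
    rcases ValuationRing.dvd_total (f a) (f i) with h | h
    · exact ⟨a, by simp, by simpa using fun j hj => h.trans (hdvd j hj)⟩
    · exact ⟨i, by simp [hi], by simpa using ⟨h, hdvd⟩⟩

variable {R : Type u} [CommRing R]

theorem Finsupp.exists_eq_apply_smul_s15 [PreValuationRing R] {ι : Type*} {v : ι →₀ R}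
    (hv : v ≠ 0) : ∃ i, ∃ w : ι →₀ R, v = v i • w := by
  classical
  obtain ⟨i, -, hi⟩ := PreValuationRing.exists_dvd_forall (Finsupp.support_nonempty_iff.mpr hv) v
  have hdvd : ∀ j, v i ∣ v j := fun j => by
    by_cases hj : j ∈ v.support
    · exact hi j hj
    · simp [Finsupp.notMem_support_iff.mp hj]
  choose c hc using hdvd
  refine ⟨i, v.sum fun j _ => Finsupp.single j (c j), ?_⟩
  conv_lhs => rw [← v.sum_single]
  rw [Finsupp.smul_sum]
  exact Finsupp.sum_congr fun j _ => by rw [Finsupp.smul_single, smul_eq_mul, ← hc]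

section SinglyProjective

variable {M : Type v} [AddCommGroup M] [Module R M]

theorem exists_linearMap_span_singleton {N : Type*} [AddCommGroup N] [Module R N] {x : M}
    {y : N} (h : ∀ r : R, r • x = 0 → r • y = 0) :
    ∃ g : (R ∙ x) →ₗ[R] N, g ⟨x, mem_span_singleton_self x⟩ = y :=
  ⟨(LinearPMap.mkSpanSingleton' (σ := RingHom.id R) x y h).toFun,
    LinearPMap.mkSpanSingleton'_apply_self _ _ _ _⟩

theorem singlyProjective_of_forall_exists_smul
    (h : ∀ x : M, ∃ (s : R) (y : M), s • y = x ∧ ∀ r : R, r • x = 0 → r * s = 0) :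
    SinglyProjective R M := by
  intro x
  obtain ⟨s, y, rfl, hs⟩ := h x
  obtain ⟨g, hg⟩ := exists_linearMap_span_singleton (y := s) hs
  refine ⟨PUnit, Finsupp.lsingle PUnit.unit ∘ₗ g, Finsupp.linearCombination R fun _ => y, ?_⟩
  rintro ⟨n, hn⟩
  obtain ⟨c, rfl⟩ := mem_span_singleton.mp hn
  have hc : (⟨c • s • y, hn⟩ : R ∙ (s • y)) = c • ⟨s • y, mem_span_singleton_self _⟩ := rfl
  rw [hc, map_smul, map_smul, LinearMap.comp_apply, hg]
  simp

theorem SinglyProjective.exists_smul_eq [PreValuationRing R] (hM : SinglyProjective R M) (x : M) :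
    ∃ (s : R) (y : M), s • y = x ∧ ∀ r : R, r • x = 0 → r * s = 0 := by
  obtain ⟨ι, φ, π, hφπ⟩ := hM x
  let x' : R ∙ x := ⟨x, mem_span_singleton_self x⟩
  have hx : π (φ x') = x := hφπ x'
  by_cases hv : φ x' = 0
  · exact ⟨0, 0, by simpa [hv] using hx, by simp⟩
  obtain ⟨i, w, hw⟩ := Finsupp.exists_eq_apply_smul_s15 hv
  refine ⟨φ x' i, π w, by rw [← map_smul, ← hw, hx], fun r hr => ?_⟩
  have : r • φ x' = 0 := by rw [← map_smul, show r • x' = 0 from Subtype.ext hr, map_zero]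
  simpa using congr($this i)

end SinglyProjective

section LocallyProjective

variable {M : Type v} [AddCommGroup M] [Module R M]

def Submodule.FactorsThroughFree (N : Submodule R M) : Prop :=
  ∃ (ι : Type v) (φ : M →ₗ[R] ι →₀ R) (π : (ι →₀ R) →ₗ[R] M), ∀ x ∈ N, π (φ x) = x

/-- Once `N₁` is split off by `π ∘ φ`, the complementary projection `id - π ∘ φ` kills `N₁`
and reduces `N₁ ⊔ N₂` to the image of `N₂`. -/
theorem Submodule.FactorsThroughFree.sup {N₁ N₂ : Submodule R M} {ι : Type v}
    {φ : M →ₗ[R] ι →₀ R} {π : (ι →₀ R) →ₗ[R] M} (h₁ : ∀ x ∈ N₁, π (φ x) = x)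
    (h₂ : (N₂.map (LinearMap.id - π ∘ₗ φ)).FactorsThroughFree) :
    (N₁ ⊔ N₂).FactorsThroughFree := by
  obtain ⟨κ, φ₂, π₂, h₂⟩ := h₂
  set θ := LinearMap.id - π ∘ₗ φ
  let e := Finsupp.sumFinsuppLEquivProdFinsupp R (M := R) (α := ι) (β := κ)
  refine ⟨ι ⊕ κ, e.symm.toLinearMap ∘ₗ φ.prod (φ₂ ∘ₗ θ), π.coprod π₂ ∘ₗ e.toLinearMap, ?_⟩
  intro x hx
  obtain ⟨x₁, hx₁, x₂, hx₂, rfl⟩ := mem_sup.mp hx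
  have hθ : θ (x₁ + x₂) = θ x₂ := by simp [θ, h₁ x₁ hx₁]
  have := h₂ (θ (x₁ + x₂)) (hθ ▸ mem_map_of_mem hx₂)
  simp only [LinearMap.comp_apply, LinearEquiv.coe_coe, LinearEquiv.apply_symm_apply,
    LinearMap.prod_apply, Function.prod_apply, LinearMap.coprod_apply]
  rw [this]
  simp [θ]

theorem SinglyProjective.exists_factorization_span_singleton [PreValuationRing R]
    [Module.Injective R R] (hM : SinglyProjective R M) (a : M) :
    ∃ (φ : M →ₗ[R] PUnit.{v + 1} →₀ R) (π : (PUnit →₀ R) →ₗ[R] M), ∀ x ∈ R ∙ a, π (φ x) = x := by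
  obtain ⟨s, y, rfl, hs⟩ := hM.exists_smul_eq a
  obtain ⟨g, hg⟩ := exists_linearMap_span_singleton (y := s) hs
  obtain ⟨h, hh⟩ := Module.Injective.extension_property R R _ M _ (injective_subtype _) g
  refine ⟨Finsupp.lsingle PUnit.unit ∘ₗ h, Finsupp.linearCombination R fun _ => y, ?_⟩
  intro x hx
  obtain ⟨c, rfl⟩ := mem_span_singleton.mp hx
  have hsy : h (s • y) = s := (LinearMap.congr_fun hh _).trans hg
  rw [LinearMap.comp_apply, map_smul h, hsy, Finsupp.lsingle_apply,
    Finsupp.linearCombination_single, smul_eq_mul, mul_smul]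

theorem locallyProjective_of_singlyProjective [PreValuationRing R] [Module.Injective R R]
    (hM : SinglyProjective R M) : LocallyProjective R M := by
  suffices ∀ (n : ℕ) (v : Fin n → M), (span R (Set.range v)).FactorsThroughFree by
    intro N hN
    obtain ⟨n, v, rfl⟩ := fg_iff_exists_fin_generating_family.mp hN
    exact this n v
  intro n
  induction n with
  | zero => exact fun v => ⟨PEmpty, 0, 0, by simp [Set.range_eq_empty]⟩
  | succ n ih =>
    intro v
    obtain ⟨φ, π, h⟩ := hM.exists_factorization_span_singleton (v 0)
    rw [Fin.range_fin_succ, span_insert]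
    refine .sup h ?_
    rw [map_span, ← Set.range_comp]
    exact ih _

theorem LocallyProjective.finitelyProjective (hM : LocallyProjective R M) :
    FinitelyProjective R M := by
  intro N hN
  obtain ⟨ι, φ, π, h⟩ := hM N hN
  exact ⟨ι, φ ∘ₗ N.subtype, π, fun n => h n n.2⟩

end LocallyProjective

section Localization

variable {S : Submonoid R} (hS : S ≤ nonZeroDivisors R) {L : Type*} [CommRing L] [Algebra R L]
  [IsLocalization S L]
include hS

theorem IsLocalization.singlyProjective_s15 : SinglyProjective R L := by
  refine singlyProjective_of_forall_exists_smul fun x => ?_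
  obtain ⟨⟨a, t⟩, rfl⟩ := IsLocalization.mk'_surjective S x
  refine ⟨a, IsLocalization.mk' L 1 t, IsLocalization.smul_mk'_one a t, fun r hr => ?_⟩
  rw [IsLocalization.smul_mk', IsLocalization.mk'_eq_zero_iff] at hr
  obtain ⟨⟨t', ht'⟩, h⟩ := hr
  exact (mem_nonZeroDivisors_iff_right.mp (hS ht')) _ (by rwa [mul_comm])

theorem IsLocalization.isUnit_of_factorsThroughFree (h : (R ∙ (1 : L)).FactorsThroughFree)
    {s : R} (hs : s ∈ S) : IsUnit s := by
  classical
  obtain ⟨ι, φ, π, hφπ⟩ := h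
  set v := φ 1
  obtain ⟨⟨b, hb⟩, hb_int⟩ := IsLocalization.exist_integer_multiples_of_finset S
    (v.support.image fun l => π (Finsupp.single l 1))
  have hint : ∀ l ∈ v.support,
      b • π (Finsupp.single l 1) ∈ LinearMap.range (Algebra.linearMap R L) := fun l hl => by
    obtain ⟨t, ht⟩ := hb_int _ (Finset.mem_image_of_mem _ hl)
    exact ⟨t, ht⟩
  set w := φ (IsLocalization.mk' L 1 ⟨s * b, S.mul_mem hs hb⟩)
  have hvw : ∀ l, v l = s * b * w l := fun l => by
    rw [← smul_eq_mul, ← Finsupp.smul_apply, ← map_smul, IsLocalization.smul_mk'_one,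
      IsLocalization.mk'_self]
  -- `b` clears the denominators of `π` on the support of `φ 1 = (s * b) • w`, so `1 ∈ s R`
  have hsum : (1 : L) = s • ∑ l ∈ v.support, w l • b • π (Finsupp.single l 1) := by
    have h1 : π v = 1 := hφπ 1 (mem_span_singleton_self 1)
    rw [← h1]
    conv_lhs => rw [← v.sum_single]
    rw [map_finsuppSum, Finsupp.sum, Finset.smul_sum]
    refine Finset.sum_congr rfl fun l _ => ?_
    rw [← Finsupp.smul_single_one, map_smul, hvw, smul_smul, smul_smul]
    congr 1
    ring
  obtain ⟨t, ht⟩ := sum_mem fun l hl => smul_mem _ (w l) (hint l hl)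
  refine IsUnit.of_mul_eq_one t (IsLocalization.injective L hS ?_)
  rw [map_mul, map_one, hsum, Algebra.smul_def, ← ht]
  rfl

end Localization

theorem isUnit_of_forall_locallyProjective
    (hLP : ∀ (M : Type u) [AddCommGroup M] [Module R M],
      SinglyProjective R M → LocallyProjective R M) {r : R} (hr : r ∈ nonZeroDivisors R) :
    IsUnit r := by
  have hS : Submonoid.powers r ≤ nonZeroDivisors R := Submonoid.powers_le.mpr hr
  exact IsLocalization.isUnit_of_factorsThroughFree hS (L := Localization.Away r)
    (hLP _ (IsLocalization.singlyProjective_s15 hS) _ (fg_span_singleton 1)) (Submonoid.mem_powers r)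

theorem IsLocalRing.setOf_exists_mul_eq_zero_eq_maximalIdeal_iff [IsLocalRing R] :
    {r : R | ∃ s : R, s ≠ 0 ∧ r * s = 0} = (IsLocalRing.maximalIdeal R : Set R) ↔
      ∀ r ∈ nonZeroDivisors R, IsUnit r := by
  have hsub : {r : R | ∃ s : R, s ≠ 0 ∧ r * s = 0} ⊆ IsLocalRing.maximalIdeal R :=
    fun r ⟨s, hs, hrs⟩ hr => hs (hr.mul_left_cancel (by rw [hrs, mul_zero]))
  rw [Set.Subset.antisymm_iff, and_iff_right hsub]
  refine ⟨fun h r hr => ?_, fun h r hr => ?_⟩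
  · by_contra hu
    obtain ⟨s, hs, hrs⟩ := h hu
    exact hs (mem_nonZeroDivisors_iff_left.mp hr s hrs)
  · by_contra hz
    refine hr (h r (mem_nonZeroDivisors_iff_left.mpr fun s hrs => ?_))
    by_contra hs
    exact hz ⟨s, hs, hrs⟩

section EssentialExtension

variable {M : Type v} [AddCommGroup M] [Module R M]

def Submodule.IsEssentialIn (K N : Submodule R M) : Prop :=
  K ≤ N ∧ ∀ y ∈ N, y ≠ 0 → ∃ r : R, r • y ≠ 0 ∧ r • y ∈ K

theorem Submodule.exists_maximal_isEssentialIn (K : Submodule R M) :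
    ∃ E, Maximal K.IsEssentialIn E := by
  have hK : K.IsEssentialIn K :=
    ⟨le_rfl, fun y hy hy0 => ⟨1, by simpa using hy0, by simpa using hy⟩⟩
  have hchain : ∀ c ⊆ {N | K.IsEssentialIn N}, IsChain (· ≤ ·) c → ∀ N ∈ c,
      ∃ ub ∈ {N | K.IsEssentialIn N}, ∀ N' ∈ c, N' ≤ ub := by
    intro c hc hchain N hN
    refine ⟨sSup c, ⟨(hc hN).1.trans (le_sSup hN), fun y hy hy0 => ?_⟩, fun _ => le_sSup⟩
    obtain ⟨N', hN', hy'⟩ := (mem_sSup_of_directed ⟨N, hN⟩ hchain.directedOn).mp hy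
    exact (hc hN').2 y hy' hy0
  obtain ⟨E, -, hE⟩ := zorn_le_nonempty₀ _ hchain K hK
  exact ⟨E, hE⟩

theorem Submodule.exists_maximal_disjoint (K : Submodule R M) :
    ∃ C : Submodule R M, Maximal (Disjoint · K) C := by
  obtain ⟨C, -, hC⟩ := zorn_le_nonempty₀ {C : Submodule R M | Disjoint C K}
    (fun c hc hchain _ _ => ⟨sSup c, hchain.directedOn.disjoint_sSup_left.mpr fun _ hC => hc hC,
      fun _ => le_sSup⟩) ⊥ disjoint_bot_left
  exact ⟨C, hC⟩

theorem Submodule.exists_retraction_of_maximal_isEssentialIn [Module.Injective R M]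
    {K E : Submodule R M} (hE : Maximal K.IsEssentialIn E) :
    ∃ p : M →ₗ[R] E, ∀ x : E, p x = x := by
  obtain ⟨C, hC⟩ := K.exists_maximal_disjoint
  have hCK := disjoint_def.mp hC.prop
  have key : ∀ q : M ⧸ C, q ≠ 0 → ∃ k ∈ K, k ≠ 0 ∧ ∃ r : R, r • q = C.mkQ k := by
    intro q hq
    obtain ⟨x, rfl⟩ := C.mkQ_surjective q
    have hlt : C < C ⊔ R ∙ x :=
      left_lt_sup.mpr fun hx => hq ((C.mkQ_apply x).trans ((Quotient.mk_eq_zero C).mpr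
        (span_singleton_le_iff_mem x C |>.mp hx)))
    obtain ⟨k, hk, hkK, hk0⟩ : ∃ k ∈ C ⊔ R ∙ x, k ∈ K ∧ k ≠ 0 := by
      simpa [disjoint_def] using hC.not_prop_of_gt hlt
    obtain ⟨c, hc, z, hz, rfl⟩ := mem_sup.mp hk
    obtain ⟨r, rfl⟩ := mem_span_singleton.mp hz
    refine ⟨c + r • x, hkK, hk0, r, ?_⟩
    simp [(Quotient.mk_eq_zero C).mpr hc]
  have hinj : Function.Injective (C.mkQ ∘ₗ E.subtype) := by
    refine (injective_iff_map_eq_zero _).mpr fun e he => ?_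
    have heC : (e : M) ∈ C := (Quotient.mk_eq_zero C).mp he
    by_contra he0
    obtain ⟨r, hr0, hrK⟩ := hE.prop.2 e e.2 (by simpa using he0)
    exact hr0 (hCK _ (C.smul_mem r heC) hrK)
  obtain ⟨h, hh⟩ := Module.Injective.out _ hinj E.subtype
  have hE_le : E ≤ LinearMap.range h := fun e he => ⟨_, hh ⟨e, he⟩⟩
  have hess : K.IsEssentialIn (LinearMap.range h) := by
    refine ⟨hE.prop.1.trans hE_le, ?_⟩
    rintro _ ⟨q, rfl⟩ hy
    obtain ⟨k, hkK, hk0, r, hr⟩ := key q (by rintro rfl; exact hy (map_zero h))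
    have hk : h (C.mkQ k) = k := hh ⟨k, hE.prop.1 hkK⟩
    exact ⟨r, by rwa [← map_smul, hr, hk], by rwa [← map_smul, hr, hk]⟩
  have hrange : LinearMap.range h = E := (hE.eq_of_le hess hE_le).symm
  exact ⟨(h ∘ₗ C.mkQ).codRestrict E fun x => hrange ▸ LinearMap.mem_range_self h _,
    fun x => Subtype.ext (hh x)⟩

end EssentialExtension

open CategoryTheory in
theorem Module.exists_baer_essential_extension [Small.{v} R] (N : Type v) [AddCommGroup N]
    [Module R N] :
    ∃ (E : Type v) (_ : AddCommGroup E) (_ : Module R E) (ρ : N →ₗ[R] E), Function.Injective ρ ∧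
      Module.Baer R E ∧ ∀ y : E, y ≠ 0 → ∃ r : R, r • y ≠ 0 ∧ r • y ∈ LinearMap.range ρ := by
  let J := Injective.under (ModuleCat.of R N)
  have : CategoryTheory.Injective (ModuleCat.of R J) := Injective.injective_under _
  have hJ : Module.Injective R J := Module.injective_module_of_injective_object R J
  let ρ₀ : N →ₗ[R] J := (Injective.ι (ModuleCat.of R N)).hom
  have hρ₀ : Function.Injective ρ₀ := (ModuleCat.mono_iff_injective _).mp inferInstance
  obtain ⟨E, hE⟩ := (LinearMap.range ρ₀).exists_maximal_isEssentialIn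
  obtain ⟨p, hp⟩ := exists_retraction_of_maximal_isEssentialIn hE
  have hρE : ∀ n, ρ₀ n ∈ E := fun n => hE.prop.1 ⟨n, rfl⟩
  refine ⟨E, inferInstance, inferInstance, ρ₀.codRestrict E hρE,
    fun a b hab => hρ₀ (congrArg Subtype.val hab), fun I g => ?_, fun y hy => ?_⟩
  · obtain ⟨g', hg'⟩ := Module.Baer.of_injective hJ I (E.subtype ∘ₗ g)
    exact ⟨p ∘ₗ g', fun x hx => by simp [hg' x hx, hp]⟩
  · obtain ⟨r, hr0, n, hn⟩ := hE.prop.2 y y.2 (by simpa using hy)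
    exact ⟨r, fun h => hr0 (congrArg Subtype.val h), n, Subtype.ext hn⟩

section InjectiveHull

variable {E : Type v} [AddCommGroup E] [Module R E]

theorem Module.Baer.exists_smul_eq (hE : Module.Baer R E) {x : E} {s : R}
    (h : ∀ r : R, r * s = 0 → r • x = 0) : ∃ ζ : E, s • ζ = x := by
  obtain ⟨g, hg⟩ := exists_linearMap_span_singleton (M := R) (x := s) (y := x) h
  obtain ⟨g', hg'⟩ := hE (R ∙ s) g
  refine ⟨g' 1, ?_⟩
  rw [← map_smul, smul_eq_mul, mul_one, hg' s (mem_span_singleton_self s), hg]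

theorem exists_forall_smul_eq_zero_iff_of_essential [PreValuationRing R] {ρ : R →ₗ[R] E}
    (hρ : Function.Injective ρ)
    (hess : ∀ y : E, y ≠ 0 → ∃ r : R, r • y ≠ 0 ∧ r • y ∈ LinearMap.range ρ) (x : E) :
    ∃ s : R, ∀ r : R, r • x = 0 ↔ r * s = 0 := by
  by_cases hx : x = 0
  · exact ⟨0, by simp [hx]⟩
  obtain ⟨r, hrx, d, hd⟩ := hess x hx
  have hd0 : d ≠ 0 := by
    rintro rfl
    exact hrx (by rw [← hd, map_zero])
  have key : ∀ e : R, (e * r) • x = 0 ↔ e * d = 0 := fun e => by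
    rw [mul_smul, ← hd, ← map_smul, smul_eq_mul, ← map_zero ρ, hρ.eq_iff]
  have hann : ∀ u : R, u • x = 0 → ∃ e, u = e * r := fun u hu => by
    rcases ValuationRing.dvd_total r u with ⟨e, rfl⟩ | ⟨t, rfl⟩
    · exact ⟨e, mul_comm r e⟩
    · exact absurd (by rw [mul_comm, mul_smul, hu, smul_zero]) hrx
  rcases ValuationRing.dvd_total r d with ⟨c, rfl⟩ | ⟨c, rfl⟩
  · -- both `ann x` and `ann c` consist of the `e * r` with `e * d = 0`
    refine ⟨c, fun u => ⟨fun hu => ?_, fun hu => ?_⟩⟩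
    · obtain ⟨e, rfl⟩ := hann u hu
      rw [mul_assoc]
      exact (key e).mp hu
    · rcases ValuationRing.dvd_total r u with ⟨e, rfl⟩ | ⟨t, rfl⟩
      · rw [mul_comm]
        exact (key e).mpr (by rw [← hu]; ring)
      · exact absurd (by rw [mul_right_comm, hu, zero_mul]) hd0
  · -- `ann x = 0`: an annihilator `e * (d * c)` of `x` has `e * d = 0`
    refine ⟨1, fun u => ⟨fun hu => ?_, fun hu => ?_⟩⟩
    · obtain ⟨e, rfl⟩ := hann u hu
      rw [mul_one, ← mul_assoc, (key e).mp hu, zero_mul]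
    · rw [mul_one] at hu
      rw [hu, zero_smul]

theorem singlyProjective_of_baer_of_essential [PreValuationRing R] {ρ : R →ₗ[R] E}
    (hρ : Function.Injective ρ) (hE : Module.Baer R E)
    (hess : ∀ y : E, y ≠ 0 → ∃ r : R, r • y ≠ 0 ∧ r • y ∈ LinearMap.range ρ) :
    SinglyProjective R E := by
  refine singlyProjective_of_forall_exists_smul fun x => ?_
  obtain ⟨s, hs⟩ := exists_forall_smul_eq_zero_iff_of_essential hρ hess x
  obtain ⟨ζ, hζ⟩ := hE.exists_smul_eq fun r => (hs r).mpr
  exact ⟨s, ζ, hζ, fun r => (hs r).mp⟩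

end InjectiveHull

theorem Module.baer_self_of_finitelyProjective [Nontrivial R] [PreValuationRing R]
    (hunit : ∀ r ∈ nonZeroDivisors R, IsUnit r) {E : Type v} [AddCommGroup E] [Module R E]
    (hE : Module.Baer R E) (hFP : FinitelyProjective R E) {e : E}
    (he : ∀ r : R, r • e = 0 → r = 0) : Module.Baer R R := by
  intro I f
  obtain ⟨g, hg⟩ := hE I (LinearMap.toSpanSingleton R E e ∘ₗ f)
  set θ := g 1
  obtain ⟨ι, ψ, π, hψ⟩ := hFP (span R {e, θ}) (fg_span (Set.toFinite _))
  let e' : span R {e, θ} := ⟨e, subset_span (by simp)⟩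
  let θ' : span R {e, θ} := ⟨θ, subset_span (by simp)⟩
  have hrel : ∀ i (hi : i ∈ I), i • ψ θ' = f ⟨i, hi⟩ • ψ e' := fun i hi => by
    rw [← map_smul, ← map_smul]
    congr 1
    refine Subtype.ext ?_
    change i • g 1 = f ⟨i, hi⟩ • e
    rw [← map_smul, smul_eq_mul, mul_one, hg i hi]
    rfl
  have hu0 : ψ e' ≠ 0 := fun h0 =>
    one_ne_zero (he 1 (by rw [one_smul, ← show π (ψ e') = e from hψ e', h0, map_zero]))
  obtain ⟨l, w, hw⟩ := Finsupp.exists_eq_apply_smul_s15 hu0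
  -- the coordinate `ψ e' l` divides all of `ψ e'`, so it inherits the zero annihilator of `e`
  have hreg : ψ e' l ∈ nonZeroDivisors R := mem_nonZeroDivisors_iff_right.mpr fun x hx => he x <| by
    rw [← show π (ψ e') = e from hψ e', ← map_smul, hw, smul_smul, hx, zero_smul, map_zero]
  refine ⟨LinearMap.toSpanSingleton R R (ψ θ' l * Ring.inverse (ψ e' l)), fun i hi => ?_⟩
  have hcoord : i * ψ θ' l = f ⟨i, hi⟩ * ψ e' l := by simpa using congr($(hrel i hi) l)
  rw [LinearMap.toSpanSingleton_apply, smul_eq_mul, ← mul_assoc, hcoord, mul_assoc,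
    Ring.mul_inverse_cancel _ (hunit _ hreg), mul_one]

theorem Module.injective_self_of_forall_finitelyProjective [Nontrivial R] [PreValuationRing R]
    (hunit : ∀ r ∈ nonZeroDivisors R, IsUnit r)
    (hFP : ∀ (M : Type u) [AddCommGroup M] [Module R M],
      SinglyProjective R M → FinitelyProjective R M) :
    Module.Injective R R := by
  obtain ⟨E, _, _, ρ, hρ, hE, hess⟩ := Module.exists_baer_essential_extension (R := R) R
  refine (baer_self_of_finitelyProjective hunit hE
    (hFP E (singlyProjective_of_baer_of_essential hρ hE hess)) (e := ρ 1) fun r hr => ?_).injective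
  rw [← map_smul, smul_eq_mul, mul_one, ← map_zero ρ] at hr
  exact hρ hr

/-- for a valuation ring `R` with maximal ideal `P` and set of zero-divisors `Z`
the following are equivalent: (1) `R` is self injective; (2) every singly projective
`R`-module is locally projective; (3) `Z = P` and every singly projective `R`-module is
finitely projective. -/
theorem selfInjective_iff_singlyProjective_locallyProjective (R : Type u) [CommRing R]
    [IsLocalRing R] (hval : ∀ I J : Ideal R, I ≤ J ∨ J ≤ I) :
    (Module.Injective R R ↔
      ∀ (M : Type u) [AddCommGroup M] [Module R M],
        SinglyProjective R M → LocallyProjective R M) ∧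
    ((∀ (M : Type u) [AddCommGroup M] [Module R M],
        SinglyProjective R M → LocallyProjective R M) ↔
      ({r : R | ∃ s : R, s ≠ 0 ∧ r * s = 0} = (IsLocalRing.maximalIdeal R : Set R) ∧
        ∀ (M : Type u) [AddCommGroup M] [Module R M],
          SinglyProjective R M → FinitelyProjective R M)) := by
  have : PreValuationRing R := PreValuationRing.iff_ideal_total.mpr ⟨hval⟩
  have hZ_iff := IsLocalRing.setOf_exists_mul_eq_zero_eq_maximalIdeal_iff (R := R)
  refine ⟨⟨fun _ _ _ _ => locallyProjective_of_singlyProjective, fun hLP => ?_⟩,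
    ⟨fun hLP => ?_, fun ⟨hZ, hFP⟩ _ _ _ hM => ?_⟩⟩
  · exact Module.injective_self_of_forall_finitelyProjective
      (fun _ => isUnit_of_forall_locallyProjective hLP)
      fun M _ _ hM => (hLP M hM).finitelyProjective
  · exact ⟨hZ_iff.mpr fun _ => isUnit_of_forall_locallyProjective hLP,
      fun M _ _ hM => (hLP M hM).finitelyProjective⟩
  · have := Module.injective_self_of_forall_finitelyProjective (hZ_iff.mp hZ) hFP
    exact locallyProjective_of_singlyProjective hM
end
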